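/- Let f : 2^V → ℝ≥0 be monotone submodular with f(∅) = 0, let k ≥ 1, let A ⊆ V, and let τ satisfy (1−δ)·f_k(A)/(2k) ≤ τ ≤ f_k(A)/(2k) for some δ ∈ (0,1), where f_k(A) = max_{B ⊆ A, |B| ≤ k} f(B). Let S ⊆ A be a set such that either |S| = k and f(S) ≥ kτ, or |S| < k and for every x ∈ A, f(S ∪ {x}) − f(S) < τ. Then f(S) ≥ (1/2)·(1−δ)·f_k(A). -/

import Mathlib

/-!
If `S` was filled up to `k` elements, each of gain at least `τ`, then `f S ≥ k τ`. Otherwise every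
element of `A` has gain below `τ` over `S`, so by submodularity and monotonicity an optimal
`B ⊆ A` with `|B| ≤ k` satisfies `f B ≤ f S + k τ ≤ f S + f_k(A) / 2`.
-/

open Finset

section Submodular

variable {V : Type*} [DecidableEq V] {f : Finset V → ℝ}

theorem sub_le_sum_marginal_of_disjoint
    (hsub : ∀ S T : Finset V, S ⊆ T → ∀ v ∉ T,
      f (insert v T) - f T ≤ f (insert v S) - f S)
    {S T : Finset V} (hST : Disjoint S T) :
    f (S ∪ T) - f S ≤ ∑ x ∈ T, (f (insert x S) - f S) := by
  induction T using Finset.induction_on with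
  | empty => simp
  | @insert a T haT ih =>
    rw [disjoint_insert_right] at hST
    have haST : a ∉ S ∪ T := by simp [hST.1, haT]
    have hgain := hsub S (S ∪ T) subset_union_left a haST
    rw [union_insert, sum_insert haT]
    linarith [ih hST.2]

theorem sub_le_sum_sdiff_marginal
    (hsub : ∀ S T : Finset V, S ⊆ T → ∀ v ∉ T,
      f (insert v T) - f T ≤ f (insert v S) - f S)
    (S T : Finset V) :
    f (S ∪ T) - f S ≤ ∑ x ∈ T \ S, (f (insert x S) - f S) := by
  simpa only [union_sdiff_self_eq_union] using
    sub_le_sum_marginal_of_disjoint hsub (disjoint_sdiff (s := S) (t := T))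

theorem le_add_card_mul_of_marginal_le
    (hmono : ∀ S T : Finset V, S ⊆ T → f S ≤ f T)
    (hsub : ∀ S T : Finset V, S ⊆ T → ∀ v ∉ T,
      f (insert v T) - f T ≤ f (insert v S) - f S)
    {S T : Finset V} {τ : ℝ} (hτ : 0 ≤ τ)
    (hgain : ∀ x ∈ T, f (insert x S) - f S ≤ τ) :
    f T ≤ f S + #T * τ := by
  have hsum : ∑ x ∈ T \ S, (f (insert x S) - f S) ≤ #(T \ S) * τ := by
    simpa only [nsmul_eq_mul] using
      sum_le_card_nsmul _ _ τ fun x hx => hgain x (mem_sdiff.mp hx).1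
  have hcard : (#(T \ S) : ℝ) * τ ≤ #T * τ :=
    mul_le_mul_of_nonneg_right (by exact_mod_cast card_le_card sdiff_subset) hτ
  linarith [hmono T (S ∪ T) subset_union_right, sub_le_sum_sdiff_marginal hsub S T]

end Submodular

theorem one_half_core_general {V : Type*} [DecidableEq V] (f : Finset V → ℝ)
    (hmono : ∀ S T : Finset V, S ⊆ T → f S ≤ f T)
    (hempty : f ∅ = 0)
    (hsub : ∀ S T : Finset V, S ⊆ T → ∀ v ∉ T,
      f (insert v T) - f T ≤ f (insert v S) - f S)
    (A : Finset V) (k : ℕ) (hk : 1 ≤ k)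
    (δ : ℝ) (hδ0 : 0 < δ) (hδ1 : δ < 1)
    (fkA : ℝ) (hfk : IsGreatest {x : ℝ | ∃ B ⊆ A, B.card ≤ k ∧ f B = x} fkA)
    (τ : ℝ)
    (hτ1 : (1 - δ) * fkA / (2 * (k : ℝ)) ≤ τ)
    (hτ2 : τ ≤ fkA / (2 * (k : ℝ)))
    (S : Finset V)
    (hrule : (S.card = k ∧ f S ≥ (k : ℝ) * τ) ∨
             (S.card < k ∧ ∀ x ∈ A, f (insert x S) - f S < τ)) :
    f S ≥ (1 / 2) * (1 - δ) * fkA := by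
  have hk0 : (0 : ℝ) < 2 * k := by
    have : (1 : ℝ) ≤ k := by exact_mod_cast hk
    linarith
  rw [div_le_iff₀ hk0] at hτ1
  rw [le_div_iff₀ hk0] at hτ2
  have hfk0 : 0 ≤ fkA := hfk.2 ⟨∅, empty_subset A, by simp, hempty⟩
  rcases hrule with ⟨-, hfS⟩ | ⟨-, hgain⟩
  · linarith
  · obtain ⟨B, hBA, hBk, rfl⟩ := hfk.1
    have hτ0 : 0 ≤ τ :=
      nonneg_of_mul_nonneg_left (mul_nonneg (sub_pos.2 hδ1).le hfk0 |>.trans hτ1) hk0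
    have hfB := le_add_card_mul_of_marginal_le hmono hsub hτ0
      fun x hx => (hgain x (hBA hx)).le
    have hBkτ : (#B : ℝ) * τ ≤ k * τ :=
      mul_le_mul_of_nonneg_right (by exact_mod_cast hBk) hτ0
    linarith [mul_nonneg hδ0.le hfk0]

theorem one_half_core {V : Type*} [DecidableEq V] (f : Finset V → ℝ)
    (hmono : ∀ S T : Finset V, S ⊆ T → f S ≤ f T)
    (hempty : f ∅ = 0)
    (hsub : ∀ S T : Finset V, S ⊆ T → ∀ v ∉ T,
      f (insert v T) - f T ≤ f (insert v S) - f S)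
    (A : Finset V) (k : ℕ) (hk : 1 ≤ k)
    (δ : ℝ) (hδ0 : 0 < δ) (hδ1 : δ < 1)
    (fkA : ℝ) (hfk : IsGreatest {x : ℝ | ∃ B ⊆ A, B.card ≤ k ∧ f B = x} fkA)
    (τ : ℝ)
    (hτ1 : (1 - δ) * fkA / (2 * (k : ℝ)) ≤ τ)
    (hτ2 : τ ≤ fkA / (2 * (k : ℝ)))
    (S : Finset V) (hSA : S ⊆ A)
    (hrule : (S.card = k ∧ f S ≥ (k : ℝ) * τ) ∨
             (S.card < k ∧ ∀ x ∈ A, f (insert x S) - f S < τ)) :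
    f S ≥ (1 / 2) * (1 - δ) * fkA :=
  one_half_core_general f hmono hempty hsub A k hk δ hδ0 hδ1 fkA hfk τ hτ1 hτ2 S hrule
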